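/- (Lemma: bias of the truncated quadratic U-statistic.) Let β ∈ (0,1], L > 0, and let f be a probability density on [0,1] with f ∈ H(β,L). Then for every integer k ≥ 1 and every n ≥ 2, | E_f(U_n^{(k)}) − ∫₀¹ f² | ≤ L²·k^{−2β}. Moreover the bias is nonpositive: E_f(U_n^{(k)}) = ∫₀¹ f_k² ≤ ∫₀¹ f². -/

import Mathlib

open MeasureTheory Set Filter
open scoped Classical

noncomputable section

/-- Indicator of the interval ((j)/k, (j+1)/k] (0-indexed version of ((j-1)/k, j/k], j=1..k). -/
def haarInd (k j : ℕ) (x : ℝ) : ℝ :=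
  if x ∈ Set.Ioc ((j : ℝ) / k) (((j : ℝ) + 1) / k) then 1 else 0

/-- Haar function ψ_{k,j} (0-indexed). -/
def haarFun (k j : ℕ) (x : ℝ) : ℝ := Real.sqrt k * haarInd k j x

/-- Haar projection kernel K_k(x,y) = k·Σ_j 1{x ∈ I_j}1{y ∈ I_j}. -/
def haarKernel (k : ℕ) (x y : ℝ) : ℝ :=
  (k : ℝ) * ∑ j ∈ Finset.range k, haarInd k j x * haarInd k j y

/-- Haar projection f_k(x) = ∫₀¹ K_k(x,y) f(y) dy. -/
def haarProj (k : ℕ) (f : ℝ → ℝ) (x : ℝ) : ℝ :=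
  ∫ y in Set.Icc (0:ℝ) 1, haarKernel k x y * f y

/-- f is a probability density on [0,1]. -/
def IsDensity (f : ℝ → ℝ) : Prop :=
  Measurable f ∧ (∀ x ∈ Set.Icc (0:ℝ) 1, 0 ≤ f x) ∧ (∫ x in Set.Icc (0:ℝ) 1, f x) = 1

/-- Law of an i.i.d. n-sample X_1,…,X_n from density f on [0,1]. -/
def sampleMeasure (f : ℝ → ℝ) (n : ℕ) : Measure (Fin n → ℝ) :=
  (Measure.pi fun _ : Fin n => volume.restrict (Set.Icc (0:ℝ) 1)).withDensity
    (fun X => ∏ i, ENNReal.ofReal (f (X i)))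

/-- Hölder ball H(β,L) of functions on [0,1]. -/
def holderBall (β L : ℝ) : Set (ℝ → ℝ) :=
  {h | (∀ x ∈ Set.Icc (0:ℝ) 1, |h x| ≤ L) ∧
    ∀ x ∈ Set.Icc (0:ℝ) 1, ∀ y ∈ Set.Icc (0:ℝ) 1, |h x - h y| ≤ L * |x - y| ^ β}

/-- Second-order Haar U-statistic U_n^{(k)}. -/
def Ustat (k n : ℕ) (X : Fin n → ℝ) : ℝ :=
  (1 / ((n : ℝ) * ((n : ℝ) - 1))) *
    ∑ i : Fin n, ∑ j : Fin n, if i ≠ j then haarKernel k (X i) (X j) else 0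

/-- Third-order V-statistic over distinct triples. -/
def V3 (n : ℕ) (h : ℝ → ℝ → ℝ → ℝ) (X : Fin n → ℝ) : ℝ :=
  (1 / ((n : ℝ) * ((n : ℝ) - 1) * ((n : ℝ) - 2))) *
    ∑ i1 : Fin n, ∑ i2 : Fin n, ∑ i3 : Fin n,
      if i1 ≠ i2 ∧ i1 ≠ i3 ∧ i2 ≠ i3 then h (X i1) (X i2) (X i3) else 0

/-- Third-order U-statistic estimator of ∫ f³ built from Haar projection kernels. -/
def phiHat (k1 k2 k3 n : ℕ) (X : Fin n → ℝ) : ℝ :=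
  V3 n (fun x1 x2 x3 => ∫ x in Set.Icc (0:ℝ) 1,
      haarKernel k1 x x1 * haarKernel k1 x x2 * haarKernel k1 x x3) X
  + 3 * V3 n (fun x1 x2 x3 => ∫ x in Set.Icc (0:ℝ) 1,
      haarKernel k1 x x1 * (haarKernel k3 x x2 - haarKernel k1 x x2) * haarKernel k1 x x3) X
  + 3 * V3 n (fun x1 x2 x3 => ∫ x in Set.Icc (0:ℝ) 1,
      haarKernel k1 x x1 * (haarKernel k3 x x2 - haarKernel k1 x x2) *
        (haarKernel k3 x x3 - haarKernel k1 x x3)) X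
  + 3 * V3 n (fun x1 x2 x3 => ∫ x in Set.Icc (0:ℝ) 1,
      (haarKernel k2 x x1 - haarKernel k1 x x1) * (haarKernel k2 x x2 - haarKernel k1 x x2) *
        (haarKernel k3 x x3 - haarKernel k2 x x3)) X
  + V3 n (fun x1 x2 x3 => ∫ x in Set.Icc (0:ℝ) 1,
      (haarKernel k2 x x1 - haarKernel k1 x x1) * (haarKernel k2 x x2 - haarKernel k1 x x2) *
        (haarKernel k2 x x3 - haarKernel k1 x x3)) X

/-- N = largest integer with d^{N-1} ≤ n^{1-2/log log n}. -/
def gridN (d : ℝ) (n : ℕ) : ℕ :=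
  Nat.findGreatest (fun N => d ^ (N - 1) ≤ (n : ℝ) ^ (1 - 2 / Real.log (Real.log n))) n

/-- β_j solving d^j·n = n^{2/(1+4β_j)}. -/
def gridBeta (d : ℝ) (n j : ℕ) : ℝ :=
  (2 * Real.log n / Real.log (d ^ j * (n : ℝ)) - 1) / 4

/-- k_j* = (n²/log n)^{1/(1+4β_j)}. -/
def gridKstar (d : ℝ) (n : ℕ) (j : ℕ) : ℝ :=
  ((n : ℝ) ^ 2 / Real.log n) ^ (1 / (1 + 4 * gridBeta d n j))

/-- s* = smallest j with k_j* ≥ n. -/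
def gridS (d : ℝ) (n : ℕ) : ℕ := sInf {j : ℕ | (n : ℝ) ≤ gridKstar d n j}

/-- The Lepski selector ĵ based on the Haar quadratic U-statistics. -/
def lepskiJ (d Copt : ℝ) (n : ℕ) (X : Fin n → ℝ) : ℕ :=
  sInf {j : ℕ | gridS d n ≤ j ∧ j ≤ gridN d n - 1 ∧
    ∀ l : ℕ, j ≤ l → l ≤ gridN d n - 1 →
      (Ustat (⌈gridKstar d n l⌉₊) n X - Ustat (⌈gridKstar d n j⌉₊) n X) ^ 2 ≤
        Copt ^ 2 * Real.log n * (gridKstar d n l / (n : ℝ) ^ 2)}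

/-- Completely degenerate part H of G = K_{k'} − K_k under density f. -/
def degKernel (k k' : ℕ) (f : ℝ → ℝ) (x y : ℝ) : ℝ :=
  (haarKernel k' x y - haarKernel k x y)
  - (∫ y' in Set.Icc (0:ℝ) 1, (haarKernel k' x y' - haarKernel k x y') * f y')
  - (∫ x' in Set.Icc (0:ℝ) 1, (haarKernel k' x' y - haarKernel k x' y) * f x')
  + ∫ x' in Set.Icc (0:ℝ) 1, ∫ y' in Set.Icc (0:ℝ) 1,
      (haarKernel k' x' y' - haarKernel k x' y') * f x' * f y'

/-! Distinct coordinates of the sample are independent with law `f(x) dx` on `[0,1]`, so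
`E K_k(X_i, X_j) = k ∑_m (∫_{I_m} f)²` for `i ≠ j`, and this is also `∫ f_k²` because `f_k` equals
the average `⨍_{I_m} f` on each cell `I_m` of length `1/k`. Cell by cell, `∫ f² - ∫ f_k²` is
`∫_{I_m} (f - ⨍_{I_m} f)² ≥ 0`, and Hölder continuity bounds `|f - ⨍_{I_m} f|` by `L k^{-β}` on
`I_m`; summing over the `k` cells gives the bound `L² k^{-2β}`. -/

open ProbabilityTheory
open scoped ENNReal

section SetAverage

variable {α : Type*} [MeasurableSpace α] {μ : Measure α} {s : Set α} {g : α → ℝ}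

lemma abs_sub_setAverage_le (hs₀ : μ s ≠ 0) (hs : μ s ≠ ∞) (hg : IntegrableOn g s μ) {x : α}
    {ε : ℝ} (hosc : ∀ y ∈ s, |g x - g y| ≤ ε) : |g x - ⨍ y in s, g y ∂μ| ≤ ε := by
  obtain ⟨y₁, hy₁, hle⟩ := exists_le_setAverage hs₀ hs hg
  obtain ⟨y₂, hy₂, hge⟩ := exists_setAverage_le hs₀ hs hg
  rw [abs_sub_le_iff]
  constructor
  · linarith [le_of_abs_le (hosc y₁ hy₁)]
  · linarith [neg_le_of_abs_le (hosc y₂ hy₂)]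

lemma setIntegral_sq_sub_setIntegral_sq_setAverage (hs : μ s ≠ ∞) (hg : IntegrableOn g s μ)
    (hg2 : IntegrableOn (fun x => g x ^ 2) s μ) :
    ∫ x in s, g x ^ 2 ∂μ - ∫ _ in s, (⨍ y in s, g y ∂μ) ^ 2 ∂μ
      = ∫ x in s, (g x - ⨍ y in s, g y ∂μ) ^ 2 ∂μ := by
  set a := ⨍ y in s, g y ∂μ
  have hconst : IntegrableOn (fun _ => a) s μ := integrableOn_const hs
  have hdiff : IntegrableOn (fun x => g x - a) s μ := hg.sub hconst
  have hsq : IntegrableOn (fun x => g x ^ 2 - a ^ 2) s μ := hg2.sub (integrableOn_const hs)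
  have hexpand : ∀ x, (g x - a) ^ 2 = (g x ^ 2 - a ^ 2) - 2 * a * (g x - a) := fun x => by ring
  simp_rw [hexpand]
  rw [integral_sub hsq (hdiff.const_mul _), integral_const_mul, setAverage_sub_setAverage hs,
    integral_sub hg2 (integrableOn_const hs)]
  ring

end SetAverage

section ProductDensity

variable {ι : Type*} [Fintype ι] {α : ι → Type*}

lemma indicator_univ_pi_prod {M : Type*} [CommMonoidWithZero M] {g : ∀ i, α i → M}
    (s : ∀ i, Set (α i)) (x : ∀ i, α i) :
    (univ.pi s).indicator (fun y => ∏ i, g i (y i)) x = ∏ i, (s i).indicator (g i) (x i) := by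
  by_cases hx : x ∈ univ.pi s
  · simp_all [Set.indicator]
  · obtain ⟨i, hi⟩ : ∃ i, x i ∉ s i := by simpa using hx
    rw [indicator_of_notMem hx, Finset.prod_eq_zero (Finset.mem_univ i) (indicator_of_notMem hi _)]

variable [∀ i, MeasurableSpace (α i)] {μ : ∀ i, Measure (α i)} [∀ i, IsProbabilityMeasure (μ i)]
  {g : ∀ i, α i → ℝ≥0∞}

lemma withDensity_pi_prod (hg : ∀ i, Measurable (g i))
    [∀ i, SigmaFinite ((μ i).withDensity (g i))] :
    (Measure.pi μ).withDensity (fun x => ∏ i, g i (x i))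
      = Measure.pi fun i => (μ i).withDensity (g i) := by
  refine (Measure.pi_eq fun s hs => ?_).symm
  have hind : ∀ i, Measurable ((s i).indicator (g i)) := fun i => (hg i).indicator (hs i)
  rw [withDensity_apply _ (MeasurableSet.univ_pi hs), ← lintegral_indicator (.univ_pi hs)]
  simp_rw [indicator_univ_pi_prod]
  rw [lintegral_prod_eq_prod_lintegral_of_indepFun Finset.univ _
    (iIndepFun_pi fun i => (hind i).aemeasurable) fun i => (hind i).comp (measurable_pi_apply i)]
  refine Finset.prod_congr rfl fun i _ => ?_
  rw [withDensity_apply _ (hs i), ← lintegral_indicator (hs i)]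
  exact (measurePreserving_eval μ i).lintegral_comp (hind i)

end ProductDensity

section Independence

variable {ι α : Type*} [Fintype ι] [MeasurableSpace α] {ν : Measure α} [IsProbabilityMeasure ν]

lemma integral_comp_eval_mul_comp_eval {i j : ι} (hij : i ≠ j) {u v : α → ℝ} (hu : Measurable u)
    (hv : Measurable v) :
    ∫ x, u (x i) * v (x j) ∂Measure.pi (fun _ => ν) = (∫ a, u a ∂ν) * ∫ a, v a ∂ν := by
  have hindep : IndepFun (fun x : ι → α => u (x i)) (fun x => v (x j))
      (Measure.pi fun _ => ν) :=
    ((iIndepFun_pi (X := fun _ => id) fun _ => aemeasurable_id).indepFun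
      hij).comp hu hv
  rw [← integral_comp_eval (μ := fun _ => ν) (i := i) hu.aestronglyMeasurable,
    ← integral_comp_eval (μ := fun _ => ν) (i := j) hv.aestronglyMeasurable]
  exact hindep.integral_mul_eq_mul_integral (hu.comp (measurable_pi_apply i)).aestronglyMeasurable
    (hv.comp (measurable_pi_apply j)).aestronglyMeasurable

end Independence

def haarCell (k m : ℕ) : Set ℝ := Ioc ((m : ℝ) / k) (((m : ℝ) + 1) / k)

section HaarCell

variable {k m : ℕ} {x : ℝ}

lemma haarInd_eq_indicator (k m : ℕ) : haarInd k m = (haarCell k m).indicator 1 := by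
  ext x
  simp [haarInd, haarCell, Set.indicator]

lemma measurableSet_haarCell (k m : ℕ) : MeasurableSet (haarCell k m) := measurableSet_Ioc

lemma measurable_haarInd (k m : ℕ) : Measurable (haarInd k m) := by
  rw [haarInd_eq_indicator]
  exact measurable_const.indicator (measurableSet_haarCell k m)

lemma abs_haarInd_le_one (k m : ℕ) (x : ℝ) : |haarInd k m x| ≤ 1 := by
  unfold haarInd
  split_ifs <;> norm_num

lemma pairwise_disjoint_haarCell (k : ℕ) : Pairwise (Function.onFun Disjoint (haarCell k)) := by
  have hmono : Monotone fun i : ℕ => (i : ℝ) / k := fun _ _ hij =>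
    div_le_div_of_nonneg_right (by exact_mod_cast hij) k.cast_nonneg
  show Pairwise (Function.onFun Disjoint fun m : ℕ => Ioc ((m : ℝ) / k) (((m : ℝ) + 1) / k))
  simpa using hmono.pairwise_disjoint_on_Ioc_succ

lemma haarCell_subset_Ioc (hm : m < k) : haarCell k m ⊆ Ioc 0 1 := by
  have hk : (0 : ℝ) < k := by exact_mod_cast hm.trans_le' m.zero_le
  refine Ioc_subset_Ioc (by positivity) ?_
  rw [div_le_one hk]
  exact_mod_cast hm

lemma biUnion_haarCell (hk : 0 < k) : ⋃ m ∈ Finset.range k, haarCell k m = Ioc 0 1 := by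
  refine subset_antisymm (iUnion₂_subset fun m hm => haarCell_subset_Ioc (by simpa using hm)) ?_
  have hk' : (k : ℝ) ≠ 0 := Nat.cast_ne_zero.mpr hk.ne'
  simpa [haarCell, hk'] using Ioc_subset_biUnion_Ioc k fun i : ℕ => (i : ℝ) / k

lemma volume_real_haarCell (k m : ℕ) : volume.real (haarCell k m) = (k : ℝ)⁻¹ := by
  have hlen : ((m : ℝ) + 1) / k - m / k = (k : ℝ)⁻¹ := by ring
  rw [measureReal_def, haarCell, Real.volume_Ioc, hlen, ENNReal.toReal_ofReal (by positivity)]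

lemma volume_haarCell_ne_top (k m : ℕ) : volume (haarCell k m) ≠ ∞ := measure_Ioc_lt_top.ne

lemma volume_haarCell_ne_zero (hm : m < k) : volume (haarCell k m) ≠ 0 := by
  have hk : (0 : ℝ) < k := by exact_mod_cast hm.trans_le' m.zero_le
  intro h
  have hreal := volume_real_haarCell k m
  rw [measureReal_def, h, ENNReal.toReal_zero] at hreal
  exact (inv_pos.mpr hk).ne hreal

lemma abs_sub_le_of_mem_haarCell {y : ℝ} (hx : x ∈ haarCell k m) (hy : y ∈ haarCell k m) :
    |x - y| ≤ (k : ℝ)⁻¹ := by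
  have hlen : ((m : ℝ) + 1) / k - m / k = (k : ℝ)⁻¹ := by ring
  rw [abs_sub_le_iff]
  constructor <;> linarith [hx.1, hx.2, hy.1, hy.2]

lemma haarInd_of_mem (hx : x ∈ haarCell k m) : haarInd k m x = 1 := by
  simp [haarInd_eq_indicator, hx]

lemma haarInd_of_ne_of_mem {m' : ℕ} (h : m' ≠ m) (hx : x ∈ haarCell k m) : haarInd k m' x = 0 := by
  simp [haarInd_eq_indicator, (pairwise_disjoint_haarCell k h).notMem_of_mem_right hx]

lemma setIntegral_Icc_eq_sum_haarCell (hk : 0 < k) {g : ℝ → ℝ}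
    (hg : ∀ m < k, IntegrableOn g (haarCell k m)) :
    ∫ x in Icc 0 1, g x = ∑ m ∈ Finset.range k, ∫ x in haarCell k m, g x := by
  rw [integral_Icc_eq_integral_Ioc, ← biUnion_haarCell hk]
  exact integral_biUnion_finset _ (fun m _ => measurableSet_haarCell k m)
    (fun _ _ _ _ h => pairwise_disjoint_haarCell k h) (fun m hm => hg m (by simpa using hm))

end HaarCell

section HaarProjection

variable {k m : ℕ} {x : ℝ}

lemma haarInd_mul_eq_indicator (k m : ℕ) (g : ℝ → ℝ) (y : ℝ) :
    haarInd k m y * g y = (haarCell k m).indicator g y := by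
  by_cases hy : y ∈ haarCell k m <;> simp [haarInd_eq_indicator, hy]

lemma setIntegral_haarInd_mul (hm : m < k) (g : ℝ → ℝ) :
    ∫ y in Icc 0 1, haarInd k m y * g y = ∫ y in haarCell k m, g y := by
  simp_rw [haarInd_mul_eq_indicator]
  rw [setIntegral_indicator (measurableSet_haarCell k m),
    inter_eq_right.mpr ((haarCell_subset_Ioc hm).trans Ioc_subset_Icc_self)]

lemma haarKernel_of_mem (hm : m < k) (hx : x ∈ haarCell k m) (y : ℝ) :
    haarKernel k x y = k * haarInd k m y := by
  rw [haarKernel, Finset.sum_eq_single_of_mem m (Finset.mem_range.mpr hm)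
    fun m' _ hm' => by rw [haarInd_of_ne_of_mem hm' hx, zero_mul], haarInd_of_mem hx, one_mul]

lemma haarProj_of_mem (hm : m < k) (hx : x ∈ haarCell k m) (f : ℝ → ℝ) :
    haarProj k f x = ⨍ y in haarCell k m, f y := by
  simp_rw [haarProj, haarKernel_of_mem hm hx, mul_assoc]
  rw [integral_const_mul, setIntegral_haarInd_mul hm, setAverage_eq, volume_real_haarCell,
    inv_inv, smul_eq_mul]

end HaarProjection

section HaarBias

variable {k m : ℕ} {f : ℝ → ℝ}

lemma integrableOn_haarCell_haarProj_sq (hm : m < k) (f : ℝ → ℝ) :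
    IntegrableOn (fun x => haarProj k f x ^ 2) (haarCell k m) :=
  (integrableOn_const (C := (⨍ y in haarCell k m, f y) ^ 2) (volume_haarCell_ne_top k m)).congr_fun
    (fun x hx => by rw [haarProj_of_mem hm hx]) (measurableSet_haarCell k m)

lemma setIntegral_haarCell_haarProj_sq (hm : m < k) (f : ℝ → ℝ) :
    ∫ x in haarCell k m, haarProj k f x ^ 2 = ∫ _ in haarCell k m, (⨍ y in haarCell k m, f y) ^ 2 :=
  setIntegral_congr_fun (measurableSet_haarCell k m) fun x hx => by rw [haarProj_of_mem hm hx]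

lemma integral_haarProj_sq (hk : 0 < k) (f : ℝ → ℝ) :
    ∫ x in Icc 0 1, haarProj k f x ^ 2
      = k * ∑ m ∈ Finset.range k, (∫ x in haarCell k m, f x) ^ 2 := by
  have hk' : (k : ℝ) ≠ 0 := Nat.cast_ne_zero.mpr hk.ne'
  rw [setIntegral_Icc_eq_sum_haarCell hk fun m hm => integrableOn_haarCell_haarProj_sq hm f,
    Finset.mul_sum]
  refine Finset.sum_congr rfl fun m hm => ?_
  rw [setIntegral_haarCell_haarProj_sq (Finset.mem_range.mp hm), integral_const, setAverage_eq,
    measureReal_restrict_apply_univ, volume_real_haarCell, smul_eq_mul, smul_eq_mul]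
  field_simp

lemma integral_sq_sub_integral_haarProj_sq (hk : 0 < k) (hf : IntegrableOn f (Icc 0 1))
    (hf2 : IntegrableOn (fun x => f x ^ 2) (Icc 0 1)) :
    (∫ x in Icc 0 1, f x ^ 2) - ∫ x in Icc 0 1, haarProj k f x ^ 2
      = ∑ m ∈ Finset.range k, ∫ x in haarCell k m, (f x - haarProj k f x) ^ 2 := by
  have hsub : ∀ m < k, haarCell k m ⊆ Icc 0 1 := fun m hm =>
    (haarCell_subset_Ioc hm).trans Ioc_subset_Icc_self
  rw [setIntegral_Icc_eq_sum_haarCell hk fun m hm => hf2.mono_set (hsub m hm),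
    setIntegral_Icc_eq_sum_haarCell hk fun m hm => integrableOn_haarCell_haarProj_sq hm f,
    ← Finset.sum_sub_distrib]
  refine Finset.sum_congr rfl fun m hm => ?_
  have hm := Finset.mem_range.mp hm
  rw [setIntegral_haarCell_haarProj_sq hm, setIntegral_sq_sub_setIntegral_sq_setAverage
    (volume_haarCell_ne_top k m) (hf.mono_set (hsub m hm)) (hf2.mono_set (hsub m hm))]
  exact setIntegral_congr_fun (measurableSet_haarCell k m) fun x hx => by
    rw [haarProj_of_mem hm hx]

variable {β L : ℝ}

lemma abs_sub_haarProj_le (hL : 0 ≤ L) (hβ : 0 ≤ β)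
    (hfH : ∀ x ∈ Icc (0 : ℝ) 1, ∀ y ∈ Icc (0 : ℝ) 1, |f x - f y| ≤ L * |x - y| ^ β)
    (hf : IntegrableOn f (Icc 0 1)) (hm : m < k) {x : ℝ} (hx : x ∈ haarCell k m) :
    |f x - haarProj k f x| ≤ L * (k : ℝ) ^ (-β) := by
  have hsub : haarCell k m ⊆ Icc 0 1 := (haarCell_subset_Ioc hm).trans Ioc_subset_Icc_self
  rw [haarProj_of_mem hm hx]
  refine abs_sub_setAverage_le (volume_haarCell_ne_zero hm) (volume_haarCell_ne_top k m)
    (hf.mono_set hsub) fun y hy => (hfH x (hsub hx) y (hsub hy)).trans ?_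
  rw [Real.rpow_neg k.cast_nonneg, ← Real.inv_rpow k.cast_nonneg]
  gcongr
  exact abs_sub_le_of_mem_haarCell hx hy

lemma integral_sq_sub_integral_haarProj_sq_mem_Icc (hk : 0 < k) (hL : 0 ≤ L) (hβ : 0 ≤ β)
    (hfH : ∀ x ∈ Icc (0 : ℝ) 1, ∀ y ∈ Icc (0 : ℝ) 1, |f x - f y| ≤ L * |x - y| ^ β)
    (hf : IntegrableOn f (Icc 0 1)) (hf2 : IntegrableOn (fun x => f x ^ 2) (Icc 0 1)) :
    (∫ x in Icc 0 1, f x ^ 2) - ∫ x in Icc 0 1, haarProj k f x ^ 2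
      ∈ Icc 0 ((L * (k : ℝ) ^ (-β)) ^ 2) := by
  have hk' : (k : ℝ) ≠ 0 := Nat.cast_ne_zero.mpr hk.ne'
  have hcell : ∀ m < k, ∫ x in haarCell k m, (f x - haarProj k f x) ^ 2
      ≤ (L * (k : ℝ) ^ (-β)) ^ 2 * (k : ℝ)⁻¹ := fun m hm => by
    refine (le_abs_self _).trans ?_
    rw [← Real.norm_eq_abs, ← volume_real_haarCell k m]
    refine norm_setIntegral_le_of_norm_le_const (volume_haarCell_ne_top k m).lt_top fun x hx => ?_
    rw [Real.norm_eq_abs, abs_pow]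
    exact pow_le_pow_left₀ (abs_nonneg _) (abs_sub_haarProj_le hL hβ hfH hf hm hx) 2
  rw [integral_sq_sub_integral_haarProj_sq hk hf hf2]
  constructor
  · exact Finset.sum_nonneg fun m _ => setIntegral_nonneg (measurableSet_haarCell k m)
      fun x _ => sq_nonneg _
  · calc _ ≤ ∑ _m ∈ Finset.range k, (L * (k : ℝ) ^ (-β)) ^ 2 * (k : ℝ)⁻¹ :=
          Finset.sum_le_sum fun m hm => hcell m (Finset.mem_range.mp hm)
      _ = (L * (k : ℝ) ^ (-β)) ^ 2 := by
          rw [Finset.sum_const, Finset.card_range, nsmul_eq_mul]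
          field_simp

end HaarBias

section Sampling

variable {f : ℝ → ℝ}

def densityMeasure (f : ℝ → ℝ) : Measure ℝ :=
  (volume.restrict (Icc 0 1)).withDensity fun x => ENNReal.ofReal (f x)

-- A non-integrable function has integral `0`, so `∫ f = 1` forces integrability.
lemma IsDensity.integrableOn (hf : IsDensity f) : IntegrableOn f (Icc 0 1) :=
  Integrable.of_integral_ne_zero (by simp [hf.2.2])

lemma isProbabilityMeasure_densityMeasure (hf : IsDensity f) :
    IsProbabilityMeasure (densityMeasure f) := by
  constructor
  rw [densityMeasure, withDensity_apply _ MeasurableSet.univ, Measure.restrict_univ,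
    ← ofReal_integral_eq_lintegral_ofReal hf.integrableOn
      ((ae_restrict_iff' measurableSet_Icc).mpr (Eventually.of_forall hf.2.1)), hf.2.2,
    ENNReal.ofReal_one]

lemma sampleMeasure_eq_pi (hf : IsDensity f) (n : ℕ) :
    sampleMeasure f n = Measure.pi fun _ : Fin n => densityMeasure f := by
  have := isProbabilityMeasure_densityMeasure hf
  have : IsProbabilityMeasure (volume.restrict (Icc (0 : ℝ) 1)) := ⟨by simp⟩
  exact withDensity_pi_prod (g := fun _ x => ENNReal.ofReal (f x)) fun _ => hf.1.ennreal_ofReal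

lemma integral_densityMeasure (hf : IsDensity f) (g : ℝ → ℝ) :
    ∫ x, g x ∂densityMeasure f = ∫ x in Icc 0 1, g x * f x := by
  rw [densityMeasure, integral_withDensity_eq_integral_toReal_smul
    hf.1.ennreal_ofReal (Eventually.of_forall fun _ => ENNReal.ofReal_lt_top)]
  refine setIntegral_congr_fun measurableSet_Icc fun x hx => ?_
  rw [ENNReal.toReal_ofReal (hf.2.1 x hx), smul_eq_mul, mul_comm]

end Sampling

section UStatistic

variable {k n : ℕ} {ν : Measure ℝ} [IsProbabilityMeasure ν]

lemma integrable_haarInd_comp_eval_mul {ι : Type*} [Fintype ι] (m : ℕ) (i j : ι) :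
    Integrable (fun X : ι → ℝ => haarInd k m (X i) * haarInd k m (X j))
      (Measure.pi fun _ => ν) := by
  refine Integrable.of_bound ?_ 1 (Eventually.of_forall fun X => ?_)
  · exact (((measurable_haarInd k m).comp (measurable_pi_apply i)).mul
      ((measurable_haarInd k m).comp (measurable_pi_apply j))).aestronglyMeasurable
  · rw [Real.norm_eq_abs, abs_mul]
    exact mul_le_one₀ (abs_haarInd_le_one k m _) (abs_nonneg _) (abs_haarInd_le_one k m _)

lemma integrable_haarKernel_comp_eval {ι : Type*} [Fintype ι] (i j : ι) :
    Integrable (fun X : ι → ℝ => haarKernel k (X i) (X j)) (Measure.pi fun _ => ν) :=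
  (integrable_finsetSum _ fun m _ => integrable_haarInd_comp_eval_mul m i j).const_mul _

lemma integral_haarKernel_comp_eval_of_ne {ι : Type*} [Fintype ι] {i j : ι} (hij : i ≠ j) :
    ∫ X, haarKernel k (X i) (X j) ∂Measure.pi (fun _ => ν)
      = k * ∑ m ∈ Finset.range k, (∫ x, haarInd k m x ∂ν) ^ 2 := by
  simp_rw [haarKernel]
  rw [integral_const_mul, integral_finsetSum _ fun m _ => integrable_haarInd_comp_eval_mul m i j]
  simp_rw [integral_comp_eval_mul_comp_eval hij (measurable_haarInd k _) (measurable_haarInd k _),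
    sq]

lemma integral_Ustat (hn : 2 ≤ n) :
    ∫ X, Ustat k n X ∂Measure.pi (fun _ => ν)
      = k * ∑ m ∈ Finset.range k, (∫ x, haarInd k m x ∂ν) ^ 2 := by
  set θ := (k : ℝ) * ∑ m ∈ Finset.range k, (∫ x, haarInd k m x ∂ν) ^ 2
  have hterm : ∀ i j : Fin n, ∫ X, (if i ≠ j then haarKernel k (X i) (X j) else 0)
      ∂Measure.pi (fun _ => ν) = if i ≠ j then θ else 0 := fun i j => by
    split_ifs with hij
    · exact integral_haarKernel_comp_eval_of_ne hij
    · exact integral_zero _ _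
  have hint : ∀ i j : Fin n, Integrable (fun X : Fin n → ℝ =>
      if i ≠ j then haarKernel k (X i) (X j) else 0) (Measure.pi fun _ => ν) := fun i j => by
    split_ifs
    · exact integrable_haarKernel_comp_eval i j
    · exact integrable_zero _ _ _
  have hcount : ∀ i : Fin n, ∑ j : Fin n, (if i ≠ j then θ else 0) = (n - 1) * θ := fun i => by
    rw [Finset.sum_ite, Finset.sum_const_zero, add_zero, Finset.sum_const, Finset.filter_ne,
      Finset.card_erase_of_mem (Finset.mem_univ i), Finset.card_univ, Fintype.card_fin,
      nsmul_eq_mul, Nat.cast_sub (one_le_two.trans hn), Nat.cast_one]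
  have hn2 : (2 : ℝ) ≤ n := by exact_mod_cast hn
  have hn0 : (n : ℝ) ≠ 0 := by linarith
  have hn1 : (n : ℝ) - 1 ≠ 0 := by linarith
  simp_rw [Ustat]
  rw [integral_const_mul,
    integral_finsetSum _ fun i _ => integrable_finsetSum _ fun j _ => hint i j]
  simp_rw [integral_finsetSum _ fun j _ => hint _ j, hterm, hcount, Finset.sum_const,
    Finset.card_univ, Fintype.card_fin, nsmul_eq_mul]
  field_simp

end UStatistic

/-- Lemma: bias of the truncated quadratic U-statistic. -/
theorem bias_truncated_quadratic (β L : ℝ) (hβ : β ∈ Set.Ioc (0:ℝ) 1) (hL : 0 < L)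
    (f : ℝ → ℝ) (hf : IsDensity f) (hfH : f ∈ holderBall β L)
    (k n : ℕ) (hk : 1 ≤ k) (hn : 2 ≤ n) :
    |(∫ X, Ustat k n X ∂(sampleMeasure f n)) - ∫ x in Set.Icc (0:ℝ) 1, f x ^ 2|
        ≤ L ^ 2 * (k : ℝ) ^ (-(2 * β)) ∧
    (∫ X, Ustat k n X ∂(sampleMeasure f n)) = (∫ x in Set.Icc (0:ℝ) 1, haarProj k f x ^ 2) ∧
    (∫ x in Set.Icc (0:ℝ) 1, haarProj k f x ^ 2) ≤ ∫ x in Set.Icc (0:ℝ) 1, f x ^ 2 := by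
  have := isProbabilityMeasure_densityMeasure hf
  have hf2 : IntegrableOn (fun x => f x ^ 2) (Icc 0 1) :=
    Measure.integrableOn_of_bounded (M := L ^ 2) measure_Icc_lt_top.ne
      (hf.1.pow_const 2).aestronglyMeasurable
      ((ae_restrict_iff' measurableSet_Icc).mpr (Eventually.of_forall fun x hx => by
        rw [Real.norm_eq_abs, abs_pow]
        exact pow_le_pow_left₀ (abs_nonneg _) (hfH.1 x hx) 2))
  have hmean : ∫ X, Ustat k n X ∂sampleMeasure f n = ∫ x in Icc 0 1, haarProj k f x ^ 2 := by
    rw [sampleMeasure_eq_pi hf, integral_Ustat hn, integral_haarProj_sq hk f]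
    refine congrArg _ (Finset.sum_congr rfl fun m hm => ?_)
    rw [integral_densityMeasure hf, setIntegral_haarInd_mul (Finset.mem_range.mp hm)]
  obtain ⟨hbias₀, hbias⟩ :=
    integral_sq_sub_integral_haarProj_sq_mem_Icc hk hL.le hβ.1.le hfH.2 hf.integrableOn hf2
  have hrate : (L * (k : ℝ) ^ (-β)) ^ 2 = L ^ 2 * (k : ℝ) ^ (-(2 * β)) := by
    rw [mul_pow, ← Real.rpow_mul_natCast k.cast_nonneg]
    ring_nf
  refine ⟨?_, hmean, by linarith⟩
  rw [hmean, abs_sub_comm, abs_of_nonneg hbias₀, ← hrate]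
  exact hbias
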